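/- Let L and L' be empirical losses differing in a single sample: L = (1/N)[ℓ_p(ΘW_u x_i, y_i) + ℓ_r(ΘW_e y_i, y_i) + S(Θ)] and L' = (1/N)[ℓ_p(ΘW_u x'_i, y'_i) + ℓ_r(ΘW_e y'_i, y'_i) + S(Θ)] for a common term S. If ℓ_p is σ_p-admissible and ℓ_r is σ_r-admissible, then for minimizers Θ_* of L and Θ'_* of L', D_L(Θ'_*‖Θ_*) + D_{L'}(Θ_*‖Θ'_*) ≤ (σ_p/N)(‖(Θ'_*−Θ_*)W_u x_i‖ + ‖(Θ'_*−Θ_*)W_u x'_i‖) + (σ_r/N)(‖(Θ'_*−Θ_*)W_e y_i‖ + ‖(Θ'_*−Θ_*)W_e y'_i‖). -/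

import Mathlib

/-! At the minimizers the gradients vanish, so the two Bregman distances are plain loss
differences. In their sum the common term `S` cancels, leaving the one-sample losses of the
removed and of the inserted sample, each evaluated at `Θ'⋆` and `Θ⋆`; σ-admissibility bounds
each of these four differences by the distance of the two predictions. -/

def IsAdmissible {Y : Type*} [SeminormedAddCommGroup Y] (σ : ℝ) (ℓ : Y → Y → ℝ) : Prop :=
  ∀ u u' y : Y, |ℓ u' y - ℓ u y| ≤ σ * ‖u' - u‖

section SampleLoss

variable {X Z Y : Type*} [SeminormedAddCommGroup X] [NormedSpace ℝ X]
  [SeminormedAddCommGroup Z] [NormedSpace ℝ Z] [SeminormedAddCommGroup Y] [NormedSpace ℝ Y]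

theorem IsAdmissible.abs_sub_apply_le {σ : ℝ} {ℓ : Y → Y → ℝ} (hℓ : IsAdmissible σ ℓ)
    (Θ Θ' : Z →ₗ[ℝ] Y) (v : Z) (y : Y) :
    |ℓ (Θ' v) y - ℓ (Θ v) y| ≤ σ * ‖(Θ' - Θ) v‖ := by
  simpa only [LinearMap.sub_apply] using hℓ (Θ v) (Θ' v) y

def sampleLoss (ℓp ℓr : Y → Y → ℝ) (Wu : X →ₗ[ℝ] Z) (We : Y →ₗ[ℝ] Z) (x : X) (y : Y)
    (Θ : Z →ₗ[ℝ] Y) : ℝ :=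
  ℓp (Θ (Wu x)) y + ℓr (Θ (We y)) y

theorem abs_sampleLoss_sub_le {ℓp ℓr : Y → Y → ℝ} {σp σr : ℝ}
    (hp : IsAdmissible σp ℓp) (hr : IsAdmissible σr ℓr)
    (Wu : X →ₗ[ℝ] Z) (We : Y →ₗ[ℝ] Z) (x : X) (y : Y) (Θ Θ' : Z →ₗ[ℝ] Y) :
    |sampleLoss ℓp ℓr Wu We x y Θ' - sampleLoss ℓp ℓr Wu We x y Θ|
      ≤ σp * ‖(Θ' - Θ) (Wu x)‖ + σr * ‖(Θ' - Θ) (We y)‖ := by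
  calc |sampleLoss ℓp ℓr Wu We x y Θ' - sampleLoss ℓp ℓr Wu We x y Θ|
      = |(ℓp (Θ' (Wu x)) y - ℓp (Θ (Wu x)) y) + (ℓr (Θ' (We y)) y - ℓr (Θ (We y)) y)| := by
        unfold sampleLoss; ring_nf
    _ ≤ |ℓp (Θ' (Wu x)) y - ℓp (Θ (Wu x)) y| + |ℓr (Θ' (We y)) y - ℓr (Θ (We y)) y| :=
        abs_add_le _ _
    _ ≤ σp * ‖(Θ' - Θ) (Wu x)‖ + σr * ‖(Θ' - Θ) (We y)‖ :=
        add_le_add (hp.abs_sub_apply_le Θ Θ' _ y) (hr.abs_sub_apply_le Θ Θ' _ y)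

end SampleLoss

theorem one_sample_bregman_bound_general {X Z Y : Type*}
    [NormedAddCommGroup X] [InnerProductSpace ℝ X]
    [NormedAddCommGroup Z] [InnerProductSpace ℝ Z]
    [NormedAddCommGroup Y] [InnerProductSpace ℝ Y]
    (Wu : X →ₗ[ℝ] Z) (We : Y →ₗ[ℝ] Z)
    (ℓp ℓr : Y → Y → ℝ) (σp σr : ℝ)
    (hadmp : ∀ u u' yv : Y, |ℓp u' yv - ℓp u yv| ≤ σp * ‖u' - u‖)
    (hadmr : ∀ u u' yv : Y, |ℓr u' yv - ℓr u yv| ≤ σr * ‖u' - u‖)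
    (N : ℕ) (S : (Z →ₗ[ℝ] Y) → ℝ)
    (xi xi' : X) (yi yi' : Y)
    (L L' : (Z →ₗ[ℝ] Y) → ℝ)
    (hL : L = fun Θ => (1 / (N : ℝ)) *
      (ℓp (Θ (Wu xi)) yi + ℓr (Θ (We yi)) yi + S Θ))
    (hL' : L' = fun Θ => (1 / (N : ℝ)) *
      (ℓp (Θ (Wu xi')) yi' + ℓr (Θ (We yi')) yi' + S Θ))
    (Θs Θs' : Z →ₗ[ℝ] Y) :
    (L Θs' - L Θs) + (L' Θs - L' Θs')
      ≤ (σp / N) * (‖(Θs' - Θs) (Wu xi)‖ + ‖(Θs' - Θs) (Wu xi')‖)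
        + (σr / N) * (‖(Θs' - Θs) (We yi)‖ + ‖(Θs' - Θs) (We yi')‖) := by
  set g := sampleLoss ℓp ℓr Wu We xi yi
  set g' := sampleLoss ℓp ℓr Wu We xi' yi'
  have hremoved := abs_sampleLoss_sub_le hadmp hadmr Wu We xi yi Θs Θs'
  have hinserted := abs_sampleLoss_sub_le hadmp hadmr Wu We xi' yi' Θs Θs'
  calc (L Θs' - L Θs) + (L' Θs - L' Θs')
      = (1 / (N : ℝ)) * ((g Θs' - g Θs) + -(g' Θs' - g' Θs)) := by
        subst hL hL'; simp only [g, g', sampleLoss]; ring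
    _ ≤ (1 / (N : ℝ)) * ((σp * ‖(Θs' - Θs) (Wu xi)‖ + σr * ‖(Θs' - Θs) (We yi)‖)
          + (σp * ‖(Θs' - Θs) (Wu xi')‖ + σr * ‖(Θs' - Θs) (We yi')‖)) := by
        gcongr
        · exact (le_abs_self _).trans hremoved
        · exact (neg_le_abs _).trans hinserted
    _ = (σp / N) * (‖(Θs' - Θs) (Wu xi)‖ + ‖(Θs' - Θs) (Wu xi')‖)
        + (σr / N) * (‖(Θs' - Θs) (We yi)‖ + ‖(Θs' - Θs) (We yi')‖) := by ring

/-- Third step of the stability proof: losses differing in a single sample. Since the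
gradients of `L` and `L'` vanish at the respective minimizers `Θ⋆`, `Θ'⋆`, the Bregman
distances reduce to `D_L(Θ'⋆‖Θ⋆) = L(Θ'⋆) − L(Θ⋆)` and
`D_{L'}(Θ⋆‖Θ'⋆) = L'(Θ⋆) − L'(Θ'⋆)`; their sum is bounded via σ-admissibility. -/
theorem one_sample_bregman_bound {X Z Y : Type*}
    [NormedAddCommGroup X] [InnerProductSpace ℝ X] [FiniteDimensional ℝ X]
    [NormedAddCommGroup Z] [InnerProductSpace ℝ Z] [FiniteDimensional ℝ Z]
    [NormedAddCommGroup Y] [InnerProductSpace ℝ Y] [FiniteDimensional ℝ Y]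
    (Wu : X →ₗ[ℝ] Z) (We : Y →ₗ[ℝ] Z)
    (ℓp ℓr : Y → Y → ℝ) (σp σr : ℝ) (hσp : 0 < σp) (hσr : 0 < σr)
    (hadmp : ∀ u u' yv : Y, |ℓp u' yv - ℓp u yv| ≤ σp * ‖u' - u‖)
    (hadmr : ∀ u u' yv : Y, |ℓr u' yv - ℓr u yv| ≤ σr * ‖u' - u‖)
    (hpconv : ∀ yv : Y, ConvexOn ℝ Set.univ (fun u => ℓp u yv))
    (hrconv : ∀ yv : Y, ConvexOn ℝ Set.univ (fun u => ℓr u yv))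
    (N : ℕ) (hN : 0 < N) (S : (Z →ₗ[ℝ] Y) → ℝ)
    (xi xi' : X) (yi yi' : Y)
    (L L' : (Z →ₗ[ℝ] Y) → ℝ)
    (hL : L = fun Θ => (1 / (N : ℝ)) *
      (ℓp (Θ (Wu xi)) yi + ℓr (Θ (We yi)) yi + S Θ))
    (hL' : L' = fun Θ => (1 / (N : ℝ)) *
      (ℓp (Θ (Wu xi')) yi' + ℓr (Θ (We yi')) yi' + S Θ))
    (Θs Θs' : Z →ₗ[ℝ] Y)
    (hmin : ∀ Θ, L Θs ≤ L Θ) (hmin' : ∀ Θ, L' Θs' ≤ L' Θ) :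
    (L Θs' - L Θs) + (L' Θs - L' Θs')
      ≤ (σp / N) * (‖(Θs' - Θs) (Wu xi)‖ + ‖(Θs' - Θs) (Wu xi')‖)
        + (σr / N) * (‖(Θs' - Θs) (We yi)‖ + ‖(Θs' - Θs) (We yi')‖) :=
  one_sample_bregman_bound_general Wu We ℓp ℓr σp σr hadmp hadmr N S xi xi' yi yi' L L' hL hL' Θs
    Θs'
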